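/- Let I ⊆ ℝ be an open interval, Ω' ⊆ ℝ³ open, v : I × Ω' → ℝ³ a C¹ vector field, ξ : I × Ω' → ℝ³ of class C¹ satisfying ∂_t ξ + (v·∇_x)ξ = 0, and J : I × Ω' → (0,∞) of class C¹ satisfying ∂_t J + v·∇_x J = J div v. Let φ : ℝ³ × (0,∞) → ℝ be C¹, written φ(X,J) with partial derivative ∂_J φ. Then the actual stored energy density satisfies the pointwise balance ∂_t( φ(ξ,J)/J ) + div( (φ(ξ,J)/J) v ) = (∂_J φ)(ξ,J) · div v on I × Ω'. In particular, with the pressure p = −(∂_J φ)(ξ,J), the right-hand side equals −p div v. -/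

import Mathlib

/-!
Along the line `s ↦ (t + s, x + s • v t x)` the derivative at `s = 0` of a differentiable field is
its convective derivative. Along this line `ξ` is stationary and `J` grows at rate `J div v`, so
the chain rule gives `(φ(ξ,J))˙ = J div v · ∂_J φ` and the quotient rule gives
`(φ/J)˙ = ∂_J φ div v - (φ/J) div v`. By the product rule `∂_t e + div (e v) = ė + e div v`,
and the last term cancels.
-/

open Set

noncomputable def dt (f : ℝ → (Fin 3 → ℝ) → ℝ) (t : ℝ) (x : Fin 3 → ℝ) : ℝ :=
  deriv (fun s => f s x) t

noncomputable def dx (f : ℝ → (Fin 3 → ℝ) → ℝ) (t : ℝ) (x : Fin 3 → ℝ) (j : Fin 3) : ℝ :=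
  fderiv ℝ (fun z => f t z) x (Pi.single j 1)

section Uncurry

variable {E F G : Type*} [NormedAddCommGroup E] [NormedSpace ℝ E] [NormedAddCommGroup F]
  [NormedSpace ℝ F] [NormedAddCommGroup G] [NormedSpace ℝ G] {f : E → F → G} {a : E} {b : F}

theorem hasFDerivAt_of_hasFDerivAt_uncurry {L : E × F →L[ℝ] G}
    (h : HasFDerivAt (fun p : E × F => f p.1 p.2) L (a, b)) :
    HasFDerivAt (f a) (L.comp (.inr ℝ E F)) b :=
  h.comp b (hasFDerivAt_prodMk_right a b)

theorem differentiableAt_of_differentiableAt_uncurry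
    (h : DifferentiableAt ℝ (fun p : E × F => f p.1 p.2) (a, b)) :
    DifferentiableAt ℝ (f a) b :=
  (hasFDerivAt_of_hasFDerivAt_uncurry h.hasFDerivAt).differentiableAt

end Uncurry

theorem hasDerivAt_uncurry_comp_of_hasDerivAt_zero {E : Type*} [NormedAddCommGroup E]
    [NormedSpace ℝ E] {φ : E → ℝ → ℝ} {α : ℝ → E} {β : ℝ → ℝ} {β' s₀ b : ℝ} {a : E}
    (hφ : DifferentiableAt ℝ (fun p : E × ℝ => φ p.1 p.2) (a, b))
    (hα : HasDerivAt α 0 s₀) (hβ : HasDerivAt β β' s₀) (ha : α s₀ = a) (hb : β s₀ = b) :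
    HasDerivAt (fun s => φ (α s) (β s)) (β' * deriv (φ a) b) s₀ := by
  set L := fderiv ℝ (fun p : E × ℝ => φ p.1 p.2) (a, b)
  have hL : HasFDerivAt (fun p : E × ℝ => φ p.1 p.2) L (a, b) := hφ.hasFDerivAt
  have hpartial : deriv (φ a) b = L (0, 1) :=
    (hL.comp_hasDerivAt (f := fun y => (a, y)) b
      ((hasDerivAt_const b a).prodMk (hasDerivAt_id b))).deriv
  subst ha hb
  refine (hL.comp_hasDerivAt s₀ (hα.prodMk hβ)).congr_deriv ?_
  rw [hpartial, ← smul_eq_mul, ← map_smul]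
  simp

theorem sum_mul_dx_eq_fderiv (f : ℝ → (Fin 3 → ℝ) → ℝ) (t : ℝ) (x w : Fin 3 → ℝ) :
    ∑ k, w k * dx f t x k = fderiv ℝ (f t) x w := by
  conv_rhs => rw [pi_eq_sum_univ' w, map_sum]
  simp only [map_smul, smul_eq_mul, dx]

noncomputable def convectiveDeriv (v : ℝ → (Fin 3 → ℝ) → (Fin 3 → ℝ))
    (f : ℝ → (Fin 3 → ℝ) → ℝ) (t : ℝ) (x : Fin 3 → ℝ) : ℝ :=
  dt f t x + ∑ k, v t x k * dx f t x k

noncomputable def divergence (v : ℝ → (Fin 3 → ℝ) → (Fin 3 → ℝ)) (t : ℝ) (x : Fin 3 → ℝ) : ℝ :=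
  ∑ i, dx (fun s z => v s z i) t x i

theorem dx_mul {f g : ℝ → (Fin 3 → ℝ) → ℝ} {t : ℝ} {x : Fin 3 → ℝ}
    (hf : DifferentiableAt ℝ (f t) x) (hg : DifferentiableAt ℝ (g t) x) (j : Fin 3) :
    dx (fun s z => f s z * g s z) t x j = dx f t x j * g t x + f t x * dx g t x j := by
  show fderiv ℝ (fun z => f t z * g t z) x _ = _
  rw [fderiv_fun_mul hf hg]
  simp only [dx, add_apply, smul_apply, smul_eq_mul]
  ring

theorem dt_add_sum_dx_mul_eq_convectiveDeriv_add {f : ℝ → (Fin 3 → ℝ) → ℝ}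
    {v : ℝ → (Fin 3 → ℝ) → (Fin 3 → ℝ)} {t : ℝ} {x : Fin 3 → ℝ}
    (hf : DifferentiableAt ℝ (f t) x) (hv : DifferentiableAt ℝ (v t) x) :
    dt f t x + ∑ k, dx (fun s z => f s z * v s z k) t x k
      = convectiveDeriv v f t x + f t x * divergence v t x := by
  rw [convectiveDeriv, divergence, add_assoc, Finset.mul_sum, ← Finset.sum_add_distrib]
  congr 1
  refine Finset.sum_congr rfl fun k _ => ?_
  rw [dx_mul hf (differentiableAt_pi.1 hv k)]
  ring

section Convective

variable {f : ℝ → (Fin 3 → ℝ) → ℝ} {L : ℝ × (Fin 3 → ℝ) →L[ℝ] ℝ} {t : ℝ} {x : Fin 3 → ℝ}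

theorem dt_eq_of_hasFDerivAt (h : HasFDerivAt (fun p : ℝ × (Fin 3 → ℝ) => f p.1 p.2) L (t, x)) :
    dt f t x = L (1, 0) :=
  (h.comp_hasDerivAt (f := fun s => (s, x)) t
    ((hasDerivAt_id t).prodMk (hasDerivAt_const t x))).deriv

theorem hasDerivAt_convectiveDeriv (v : ℝ → (Fin 3 → ℝ) → (Fin 3 → ℝ))
    (h : DifferentiableAt ℝ (fun p : ℝ × (Fin 3 → ℝ) => f p.1 p.2) (t, x)) :
    HasDerivAt (fun s => f (t + s) (x + s • v t x)) (convectiveDeriv v f t x) 0 := by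
  have hline : HasDerivAt (fun s : ℝ => (t + s, x + s • v t x)) ((1 : ℝ), v t x) 0 := by
    simpa using ((hasDerivAt_id (0 : ℝ)).const_add t).prodMk
      (((hasDerivAt_id (0 : ℝ)).smul_const (v t x)).const_add x)
  refine (h.hasFDerivAt.comp_hasDerivAt_of_eq 0 hline (by simp)).congr_deriv ?_
  rw [convectiveDeriv, sum_mul_dx_eq_fderiv, dt_eq_of_hasFDerivAt h.hasFDerivAt,
    (hasFDerivAt_of_hasFDerivAt_uncurry h.hasFDerivAt).fderiv, ContinuousLinearMap.comp_apply,
    ← map_add]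
  simp

end Convective

/-- given a velocity field `v`, a return mapping `ξ` transported along `v`,
a positive Jacobian field `J` satisfying `J̇ = J div v`, and a C¹ stored energy
`φ(X,J)`, the actual stored energy density `φ(ξ,J)/J` satisfies
`∂_t(φ(ξ,J)/J) + div((φ(ξ,J)/J)v) = (∂_J φ)(ξ,J)·div v = −p div v` with the pressure
`p = −(∂_J φ)(ξ,J)`. -/
theorem stored_energy_balance
    (a b : ℝ) (Ω' : Set (Fin 3 → ℝ)) (hΩ' : IsOpen Ω')
    (v ξ : ℝ → (Fin 3 → ℝ) → (Fin 3 → ℝ)) (J : ℝ → (Fin 3 → ℝ) → ℝ)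
    (hv : ContDiffOn ℝ 1 (fun p : ℝ × (Fin 3 → ℝ) => v p.1 p.2) (Ioo a b ×ˢ Ω'))
    (hξ : ContDiffOn ℝ 1 (fun p : ℝ × (Fin 3 → ℝ) => ξ p.1 p.2) (Ioo a b ×ˢ Ω'))
    (hJC1 : ContDiffOn ℝ 1 (fun p : ℝ × (Fin 3 → ℝ) => J p.1 p.2) (Ioo a b ×ˢ Ω'))
    (hJpos : ∀ t ∈ Ioo a b, ∀ x ∈ Ω', 0 < J t x)
    (htransport : ∀ t ∈ Ioo a b, ∀ x ∈ Ω', ∀ i,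
      dt (fun s z => ξ s z i) t x + ∑ k, v t x k * dx (fun s z => ξ s z i) t x k = 0)
    (hJ : ∀ t ∈ Ioo a b, ∀ x ∈ Ω',
      dt J t x + ∑ k, v t x k * dx J t x k
        = J t x * ∑ i, dx (fun s z => v s z i) t x i)
    (φ : (Fin 3 → ℝ) → ℝ → ℝ)
    (hφ : ContDiffOn ℝ 1 (fun p : (Fin 3 → ℝ) × ℝ => φ p.1 p.2) (univ ×ˢ Ioi 0)) :
    ∀ t ∈ Ioo a b, ∀ x ∈ Ω',
      (dt (fun s z => φ (ξ s z) (J s z) / J s z) t x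
          + ∑ k, dx (fun s z => (φ (ξ s z) (J s z) / J s z) * v s z k) t x k
        = deriv (φ (ξ t x)) (J t x) * ∑ i, dx (fun s z => v s z i) t x i) ∧
      (deriv (φ (ξ t x)) (J t x) * ∑ i, dx (fun s z => v s z i) t x i
        = -((-(deriv (φ (ξ t x)) (J t x))) * ∑ i, dx (fun s z => v s z i) t x i)) := by
  intro t ht x hx
  refine ⟨?_, by ring⟩
  have hnhds : Ioo a b ×ˢ Ω' ∈ nhds (t, x) := (isOpen_Ioo.prod hΩ').mem_nhds ⟨ht, hx⟩
  have hvd := (hv.contDiffAt hnhds).differentiableAt one_ne_zero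
  have hξd := (hξ.contDiffAt hnhds).differentiableAt one_ne_zero
  have hJd := (hJC1.contDiffAt hnhds).differentiableAt one_ne_zero
  have hJ0 : J t x ≠ 0 := (hJpos t ht x hx).ne'
  have hφd := (hφ.contDiffAt ((isOpen_univ.prod isOpen_Ioi).mem_nhds
    (⟨trivial, hJpos t ht x hx⟩ : (ξ t x, J t x) ∈ univ ×ˢ Ioi 0))).differentiableAt one_ne_zero
  have henergyd : DifferentiableAt ℝ
      (fun p : ℝ × (Fin 3 → ℝ) => φ (ξ p.1 p.2) (J p.1 p.2) / J p.1 p.2) (t, x) := by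
    simp only [div_eq_mul_inv]
    exact (hφd.comp (t, x) (hξd.prodMk hJd)).fun_mul (hJd.fun_inv hJ0)
  have hξline : HasDerivAt (fun s => ξ (t + s) (x + s • v t x)) 0 0 := by
    refine hasDerivAt_pi.2 fun i => ?_
    have := hasDerivAt_convectiveDeriv (f := fun s z => ξ s z i) v (differentiableAt_pi.1 hξd i)
    rwa [convectiveDeriv, htransport t ht x hx i] at this
  have hJline := hasDerivAt_convectiveDeriv v hJd
  rw [convectiveDeriv, hJ t ht x hx] at hJline
  have hφline := hasDerivAt_uncurry_comp_of_hasDerivAt_zero hφd hξline hJline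
    (by simp) (by simp)
  have henergy := (hφline.fun_div hJline (by simpa using hJ0)).unique
    (hasDerivAt_convectiveDeriv (f := fun s z => φ (ξ s z) (J s z) / J s z) v henergyd)
  rw [dt_add_sum_dx_mul_eq_convectiveDeriv_add
    (differentiableAt_of_differentiableAt_uncurry henergyd)
    (differentiableAt_of_differentiableAt_uncurry hvd), ← henergy]
  simp only [divergence, add_zero, zero_smul]
  field_simp
  ring
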